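/- For every integer k ≥ 2 there exists a finite partially ordered set (V, ≤) and a greedy antichain sequence A_1, …, A_k of length k such that |A_1 ∪ … ∪ A_k| ≤ (3/4)·α_k; moreover in the construction α_k = |V|, so the k greedy antichains cover at most 3/4 of the optimal coverage of k antichains. -/

import Mathlib

/-- A greedy antichain sequence: pairwise disjoint antichains `A 0, …, A (m-1)` such that
each `A i` has maximum cardinality among all antichains contained in the complement of
the previously chosen antichains. -/
def GreedyAntichainSeq (V : Type) [DecidableEq V] [PartialOrder V]
    {m : ℕ} (A : Fin m → Finset V) : Prop :=
  (∀ i, IsAntichain (· ≤ ·) ((A i : Finset V) : Set V)) ∧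
  (∀ i j, i ≠ j → Disjoint (A i) (A j)) ∧
  (∀ (i : Fin m) (B : Finset V), IsAntichain (· ≤ ·) ((B : Finset V) : Set V) →
    (∀ v ∈ B, ∀ j, j < i → v ∉ A j) → B.card ≤ (A i).card)

/-- `α_k`: the maximum cardinality of the union of `k` pairwise disjoint antichains. -/
noncomputable def alphaVal (V : Type) [Fintype V] [DecidableEq V] [PartialOrder V]
    (k : ℕ) : ℕ :=
  sSup {n : ℕ | ∃ A : Fin k → Finset V,
    (∀ i, IsAntichain (· ≤ ·) ((A i : Finset V) : Set V)) ∧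
    (∀ i j, i ≠ j → Disjoint (A i) (A j)) ∧
    n = (Finset.univ.biUnion A).card}

def GreedyAntichainsMissQuarter (V : Type) [Fintype V] [DecidableEq V] [PartialOrder V]
    (k : ℕ) : Prop :=
  ∃ A : Fin k → Finset V, GreedyAntichainSeq V A ∧
    4 * (Finset.univ.biUnion A).card ≤ 3 * alphaVal V k ∧
    alphaVal V k = Fintype.card V

/-!
The witness is the `k × (k + 1)` grid, ordered so that its antichains are the staircases whose
column increases strictly with the row. Its `k` rows partition it into antichains, so
`α_k = k (k + 1)`. Greedy may first take the main diagonal bent into the last column (`k + 1`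
cells, the width of the grid), and then alternately the diagonals at offset `s` above (again bent
into the last column) and below it. After `i` steps the remaining cells lie off a band of width
about `i` around the diagonal, where an antichain has at most `k - ⌊i/2⌋` cells, which is exactly
what step `i` takes. So greedy covers `k² + 1 - ∑_{t<k} ⌊t/2⌋ ≤ 3/4 · k (k + 1)` cells when
`k ≥ 3`; for `k = 2` the `2 × 2` grid with its diagonal and then one corner does it.
-/

open Finset

theorem alphaVal_eq_card_of_partition {V : Type} [Fintype V] [DecidableEq V] [PartialOrder V]
    {k : ℕ} (A : Fin k → Finset V) (hA : ∀ i, IsAntichain (· ≤ ·) (A i : Set V))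
    (hdisj : ∀ i j, i ≠ j → Disjoint (A i) (A j)) (hcover : univ.biUnion A = univ) :
    alphaVal V k = Fintype.card V := by
  have hbdd : ∀ n ∈ {n : ℕ | ∃ A : Fin k → Finset V,
      (∀ i, IsAntichain (· ≤ ·) (A i : Set V)) ∧ (∀ i j, i ≠ j → Disjoint (A i) (A j)) ∧
      n = (univ.biUnion A).card}, n ≤ Fintype.card V := by
    rintro n ⟨B, -, -, rfl⟩
    exact card_le_univ _
  refine le_antisymm (csSup_le ⟨_, A, hA, hdisj, rfl⟩ hbdd) (le_csSup ⟨_, hbdd⟩ ?_)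
  exact ⟨A, hA, hdisj, by rw [hcover, card_univ]⟩

theorem four_mul_sum_range_div_two (n : ℕ) :
    4 * ∑ t ∈ range n, t / 2 + 2 * n = n * n + n % 2 := by
  induction n with
  | zero => rfl
  | succ n ih =>
    rw [sum_range_succ, show (n + 1) * (n + 1) = n * n + 2 * n + 1 by ring]
    omega

@[ext]
structure Grid (R C : ℕ) where
  row : Fin R
  col : Fin C
deriving DecidableEq, Fintype

namespace Grid

variable {R C : ℕ}

instance : PartialOrder (Grid R C) where
  le x y := x = y ∨ (x.row < y.row ∧ y.col ≤ x.col)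
  le_refl _ := Or.inl rfl
  le_trans x y z := by
    rintro (rfl | hxy) (rfl | hyz)
    exacts [Or.inl rfl, Or.inr hyz, Or.inr hxy, Or.inr ⟨hxy.1.trans hyz.1, hyz.2.trans hxy.2⟩]
  le_antisymm x y := by
    rintro (h | hxy) (h' | hyx)
    exacts [h, h, h'.symm, absurd (hxy.1.trans hyx.1) (lt_irrefl _)]

theorem card_eq : Fintype.card (Grid R C) = R * C :=
  (Fintype.card_congr (⟨fun x => (x.row, x.col), fun p => ⟨p.1, p.2⟩, fun _ => rfl, fun _ => rfl⟩ :
    Grid R C ≃ Fin R × Fin C)).trans (by simp)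

section Antichain

variable {B : Finset (Grid R C)} (hB : IsAntichain (· ≤ ·) (B : Set (Grid R C)))
include hB

theorem col_lt_of_row_lt {x y : Grid R C} (hx : x ∈ B) (hy : y ∈ B) (h : x.row < y.row) :
    x.col < y.col := by
  by_contra! hcol
  exact hB hx hy (fun hxy => h.ne (congrArg row hxy)) (Or.inr ⟨h, hcol⟩)

theorem injOn_col : Set.InjOn (fun x : Grid R C => (x.col : ℕ)) B := by
  intro x hx y hy hcol
  rcases lt_trichotomy x.row y.row with h | h | h
  · exact absurd (col_lt_of_row_lt hB hx hy h) (by simp [Fin.ext hcol])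
  · exact Grid.ext h (Fin.ext hcol)
  · exact absurd (col_lt_of_row_lt hB hy hx h) (by simp [Fin.ext hcol])

theorem card_le_of_mapsTo_col {I : Finset ℕ} (h : ∀ x ∈ B, (x.col : ℕ) ∈ I) : B.card ≤ I.card :=
  card_le_card_of_injOn _ h (injOn_col hB)

theorem card_le_width : B.card ≤ C :=
  (card_le_of_mapsTo_col hB (I := range C) (fun x _ => mem_range.2 x.col.isLt)).trans
    (card_range C).le

/-- Let `y` be the rightmost cell below the band: every other cell is in a column `≤ y.col`, or
above the band in a row `≥ y.row` and hence in a column `> y.row + q`. -/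
theorem card_le_of_forall_off_band {p q : ℕ}
    (hband : ∀ x ∈ B, (x.row : ℕ) + q < x.col ∨ (x.col : ℕ) + p < x.row) :
    B.card ≤ max (C - (q + 1)) (R - (p + 1)) := by
  by_cases hlow : ∃ x ∈ B, (x.col : ℕ) + p < x.row
  · obtain ⟨y, hy, hymax⟩ := (B.filter fun x => (x.col : ℕ) + p < x.row).exists_max_image
      (fun x => (x.col : ℕ)) (by obtain ⟨x, hx, h⟩ := hlow; exact ⟨x, mem_filter.2 ⟨hx, h⟩⟩)
    obtain ⟨hyB, hylow⟩ := mem_filter.1 hy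
    have hcols : ∀ x ∈ B, (x.col : ℕ) ∈ range (y.col + 1) ∪ Ico (y.row + q + 1) C := by
      intro x hx
      by_cases hxy : (x.col : ℕ) ≤ y.col
      · simp only [mem_union, mem_range]
        omega
      · have hup : (x.row : ℕ) + q < x.col :=
          (hband x hx).resolve_right fun h => hxy (hymax x (mem_filter.2 ⟨hx, h⟩))
        have hrow : y.row ≤ x.row := not_lt.1 fun h =>
          hxy (Fin.le_iff_val_le_val.1 (col_lt_of_row_lt hB hx hyB h).le)
        simp only [mem_union, mem_Ico]
        omega
    have := (card_le_of_mapsTo_col hB hcols).trans (card_union_le _ _)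
    simp only [card_range, Nat.card_Ico] at this
    omega
  · push Not at hlow
    have := card_le_of_mapsTo_col hB (I := Ico (q + 1) C) fun x hx => by
      have := hband x hx
      have := hlow x hx
      simp only [mem_Ico]
      omega
    simp only [Nat.card_Ico] at this
    omega

end Antichain

def staircase (I : Finset ℕ) (g : ℕ → ℕ) : Finset (Grid R C) :=
  univ.filter fun x => (x.col : ℕ) ∈ I ∧ (x.row : ℕ) = g x.col

@[simp]
theorem mem_staircase {I : Finset ℕ} {g : ℕ → ℕ} {x : Grid R C} :
    x ∈ staircase I g ↔ (x.col : ℕ) ∈ I ∧ (x.row : ℕ) = g x.col := by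
  simp [staircase]

theorem card_staircase {I : Finset ℕ} {g : ℕ → ℕ} (h : ∀ c ∈ I, c < C ∧ g c < R) :
    (staircase I g : Finset (Grid R C)).card = I.card := by
  refine card_nbij (fun x => (x.col : ℕ)) (fun x hx => (mem_staircase.1 hx).1) ?_ ?_
  · intro x hx y hy hcol
    simp only [mem_coe, mem_staircase] at hx hy hcol
    exact Grid.ext (Fin.ext (by rw [hx.2, hy.2, hcol])) (Fin.ext hcol)
  · intro c hc
    exact ⟨⟨⟨g c, (h c hc).2⟩, ⟨c, (h c hc).1⟩⟩, by simpa using hc, rfl⟩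

theorem isAntichain_staircase {I : Finset ℕ} {g : ℕ → ℕ} (hg : Monotone g) :
    IsAntichain (· ≤ ·) ((staircase I g : Finset (Grid R C)) : Set (Grid R C)) := by
  rintro x hx y hy hne (rfl | ⟨hrow, hcol⟩)
  · exact hne rfl
  · have := hg (Fin.le_iff_val_le_val.1 hcol)
    simp only [mem_coe, mem_staircase] at hx hy
    omega

theorem alphaVal_eq : alphaVal (Grid R C) R = R * C := by
  rw [← card_eq]
  refine alphaVal_eq_card_of_partition (fun j => staircase (range C) fun _ => j)
    (fun _ => isAntichain_staircase monotone_const) ?_ ?_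
  · intro i j hij
    refine disjoint_left.2 fun x hi hj => hij (Fin.ext ?_)
    simp only [mem_staircase] at hi hj
    omega
  · exact eq_univ_of_forall fun x => mem_biUnion.2 ⟨x.row, mem_univ _, by simp⟩

section Construction

variable (k : ℕ)

/-- The diagonal `col = row + s`, continued by the cell `(k - 1 - s, k)` of the extra column. -/
def upperDiag (s : ℕ) : Finset (Grid k (k + 1)) :=
  staircase (Icc s k) fun c => min c (k - 1) - s

def lowerDiag (s : ℕ) : Finset (Grid k (k + 1)) :=
  staircase (range (k - s)) (· + s)

/-- The steps are `upperDiag 0, upperDiag 1, lowerDiag 1, upperDiag 2, lowerDiag 2, …`. -/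
def greedyStep (t : ℕ) : Finset (Grid k (k + 1)) :=
  if t = 0 ∨ t % 2 = 1 then upperDiag k ((t + 1) / 2) else lowerDiag k (t / 2)

variable {k}

theorem mem_greedyStep {t : ℕ} {x : Grid k (k + 1)} :
    x ∈ greedyStep k t ↔
      (t = 0 ∨ t % 2 = 1) ∧ (t + 1) / 2 ≤ x.col ∧
        (x.row : ℕ) = min (x.col : ℕ) (k - 1) - (t + 1) / 2 ∨
      ¬(t = 0 ∨ t % 2 = 1) ∧ (x.col : ℕ) < k - t / 2 ∧ (x.row : ℕ) = x.col + t / 2 := by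
  have := x.col.isLt
  unfold greedyStep upperDiag lowerDiag
  split_ifs with h
  · simp only [mem_staircase, mem_Icc, h, true_and, not_true_eq_false, false_and, or_false]
    omega
  · simp only [mem_staircase, mem_range, h, false_and, not_false_eq_true, true_and, false_or]

theorem card_greedyStep {t : ℕ} (ht : t < k) :
    (greedyStep k t).card = if t = 0 then k + 1 else k - t / 2 := by
  unfold greedyStep upperDiag lowerDiag
  split_ifs
  iterate 2
    rw [card_staircase (fun c hc => by simp only [mem_Icc] at hc; omega), Nat.card_Icc]
    omega
  · omega
  · rw [card_staircase (fun c hc => by simp only [mem_range] at hc; omega), card_range]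

theorem isAntichain_greedyStep (t : ℕ) :
    IsAntichain (· ≤ ·) ((greedyStep k t : Finset (Grid k (k + 1))) : Set (Grid k (k + 1))) := by
  unfold greedyStep upperDiag lowerDiag
  split_ifs
  exacts [isAntichain_staircase fun a b h => by omega, isAntichain_staircase fun a b h => by omega]

theorem disjoint_greedyStep {t t' : ℕ} (ht : t < k) (ht' : t' < k) (h : t ≠ t') :
    Disjoint (greedyStep k t) (greedyStep k t') := by
  refine disjoint_left.2 fun x hx hx' => ?_
  rw [mem_greedyStep] at hx hx'
  rcases hx with ⟨_, _, _⟩ | ⟨_, _, _⟩ <;> rcases hx' with ⟨_, _, _⟩ | ⟨_, _, _⟩ <;> omega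

/-- Steps `2s - 1` and `2s` remove the diagonals at offset `s` above and below the main one,
so a cell missed by the first `i` steps lies off the band of those offsets. -/
theorem off_band_of_forall_not_mem_greedyStep {i : ℕ} (hi : 1 ≤ i) {x : Grid k (k + 1)}
    (hx : ∀ j < i, x ∉ greedyStep k j) :
    (x.row : ℕ) + i / 2 < x.col ∨ (x.col : ℕ) + (i - 1) / 2 < x.row := by
  have := x.row.isLt
  have := x.col.isLt
  by_contra! h
  by_cases hup : (x.row : ℕ) ≤ x.col
  · refine hx (2 * (min (x.col : ℕ) (k - 1) - x.row) - 1) (by omega) (mem_greedyStep.2 ?_)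
    omega
  · refine hx (2 * (x.row - x.col)) (by omega) (mem_greedyStep.2 ?_)
    omega

theorem card_le_card_greedyStep {i : ℕ} (hi : i < k) {B : Finset (Grid k (k + 1))}
    (hB : IsAntichain (· ≤ ·) (B : Set (Grid k (k + 1))))
    (hav : ∀ x ∈ B, ∀ j < i, x ∉ greedyStep k j) :
    B.card ≤ (greedyStep k i).card := by
  rw [card_greedyStep hi]
  split_ifs with h0
  · exact card_le_width hB
  · have := card_le_of_forall_off_band hB fun x hx =>
      off_band_of_forall_not_mem_greedyStep (Nat.one_le_iff_ne_zero.2 h0) (hav x hx)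
    omega

theorem greedyAntichainSeq_greedyStep :
    GreedyAntichainSeq (Grid k (k + 1)) fun t : Fin k => greedyStep k t :=
  ⟨fun t => isAntichain_greedyStep t,
    fun t t' h => disjoint_greedyStep t.isLt t'.isLt (Fin.val_injective.ne h),
    fun i _ hB hav => card_le_card_greedyStep i.isLt hB fun x hx j hj =>
      hav x hx ⟨j, hj.trans i.isLt⟩ hj⟩

theorem four_mul_card_biUnion_greedyStep_le (hk : 3 ≤ k) :
    4 * (univ.biUnion fun t : Fin k => greedyStep k t).card ≤ 3 * (k * (k + 1)) := by
  rw [card_biUnion fun t _ t' _ h => disjoint_greedyStep t.isLt t'.isLt (Fin.val_injective.ne h),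
    Fin.sum_univ_eq_sum_range (fun t => (greedyStep k t).card)]
  have hsum : ∑ t ∈ range k, ((greedyStep k t).card + t / 2) =
      ∑ t ∈ range k, (k + if t = 0 then 1 else 0) := sum_congr rfl fun t ht => by
    have ht := mem_range.1 ht
    rw [card_greedyStep ht]
    split_ifs <;> omega
  simp only [sum_add_distrib, sum_const, card_range, smul_eq_mul, sum_ite_eq', mem_range,
    show 0 < k by omega, if_true] at hsum
  have := four_mul_sum_range_div_two k
  have : k * (k + 1) = k * k + k := by ring
  omega

theorem greedyAntichainsMissQuarter_of_three_le (hk : 3 ≤ k) :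
    GreedyAntichainsMissQuarter (Grid k (k + 1)) k :=
  ⟨_, greedyAntichainSeq_greedyStep,
    by rw [alphaVal_eq]; exact four_mul_card_biUnion_greedyStep_le hk, by rw [alphaVal_eq, card_eq]⟩

end Construction

def twoStep : Fin 2 → Finset (Grid 2 2) :=
  ![staircase (range 2) id, staircase {1} fun _ => 0]

theorem greedyAntichainSeq_twoStep : GreedyAntichainSeq (Grid 2 2) twoStep := by
  refine ⟨fun i => ?_, by decide, fun i B hB hav => ?_⟩
  · fin_cases i
    exacts [isAntichain_staircase monotone_id, isAntichain_staircase monotone_const]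
  · fin_cases i
    · exact (card_le_width hB).trans (by decide)
    · refine (card_le_of_forall_off_band hB (p := 0) (q := 0) fun x hx => ?_).trans (by decide)
      have := hav x hx 0 (by decide)
      simp only [twoStep, Fin.isValue, Matrix.cons_val_zero, mem_staircase, mem_range, id_eq,
        not_and] at this
      omega

theorem greedyAntichainsMissQuarter_two : GreedyAntichainsMissQuarter (Grid 2 2) 2 :=
  ⟨twoStep, greedyAntichainSeq_twoStep, by rw [alphaVal_eq]; decide, by rw [alphaVal_eq, card_eq]⟩

end Grid

/-- For every `k ≥ 2` there is a finite poset on which some greedy antichain sequence of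
length `k` covers at most `3/4` of `α_k`; moreover in the construction `α_k = |V|`. -/
theorem greedy_antichains_cover_three_quarters (k : ℕ) (hk : 2 ≤ k) :
    ∃ (V : Type) (f : Fintype V) (d : DecidableEq V) (p : PartialOrder V),
      @GreedyAntichainsMissQuarter V f d p k := by
  rcases hk.eq_or_lt with rfl | hk
  · exact ⟨Grid 2 2, _, _, _, Grid.greedyAntichainsMissQuarter_two⟩
  · exact ⟨Grid k (k + 1), _, _, _, Grid.greedyAntichainsMissQuarter_of_three_le hk⟩
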